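/- arXiv:2406.08043 — 3 statements merged into one kernel-verified Lean document; each statement's English description precedes it below -/
import Mathlib

section
/- Let I be a finite set and let μ₁, μ₂ be strictly positive probability measures on the configuration space {0,1}^I (functions I → {0,1}). Suppose that for every j ∈ I and every pair of configurations W, Z with W ≤ Z pointwise, μ₁(W^{j←1})·μ₂(Z^{j←0}) ≤ μ₂(Z^{j←1})·μ₁(W^{j←0}), where X^{j←b} denotes the configuration agreeing with X off j and taking value b at j (equivalently, the conditional μ₁-probability that coordinate j equals 1 given that all other coordinates agree with W is at most the conditional μ₂-probability that coordinate j equals 1 given that all other coordinates agree with Z). Then μ₁ is stochastically dominated by μ₂: there exists a probability measure κ on {0,1}^I × {0,1}^I whose first marginal is μ₁, whose second marginal is μ₂, and which assigns probability 1 to the set of pairs (X,Y) with X ≤ Y pointwise. -/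
/-!
Run the heat-bath dynamics (Gibbs sampler) of `μ₁` and `μ₂` simultaneously: pick a site `j` and
resample it in both configurations from the conditional laws, coupled so that as much mass as
possible falls on the diagonal. The hypothesis says that on an ordered pair `W ≤ Z` the
conditional probability of a `1` at `j` is smaller under `μ₁` than under `μ₂`, so a coupled step
never destroys the order. A Cesàro limit of the coupled chain started at an ordered pair is a
stationary law `κ` that charges only ordered pairs. Its marginals are stationary for the two
heat-bath chains, which are reversible and irreducible, so they are `μ₁` and `μ₂`.
-/

open Filter Topology Set Finset Function Matrix

theorem Convex.exists_fixedPoint_of_mapsTo {E : Type*} [NormedAddCommGroup E]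
    [NormedSpace ℝ E] {C : Set E} (hconv : Convex ℝ C) (hcpt : IsCompact C) (hne : C.Nonempty)
    (f : E →L[ℝ] E) (hf : MapsTo f C C) : ∃ x ∈ C, f x = x := by
  obtain ⟨x₀, hx₀⟩ := hne
  set avg : ℕ → E := fun m => ∑ k ∈ range (m + 1), ((m : ℝ) + 1)⁻¹ • f^[k] x₀
  have havg_mem (m : ℕ) : avg m ∈ C :=
    hconv.sum_mem (fun _ _ => by positivity) (by simp [field]) fun k _ => hf.iterate k hx₀
  -- the Cesàro averages are almost invariant: `f` moves them by `(f^[m+1] x₀ - x₀) / (m+1)`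
  have hdefect (m : ℕ) : f (avg m) - avg m = ((m : ℝ) + 1)⁻¹ • (f^[m + 1] x₀ - x₀) := by
    simp only [avg, map_sum, map_smul, ← iterate_succ_apply' f, ← Finset.sum_sub_distrib,
      ← smul_sub, ← Finset.smul_sum, Finset.sum_range_sub (fun k => f^[k] x₀),
      iterate_zero_apply]
  obtain ⟨R, hR⟩ := isBounded_iff_forall_norm_le.mp hcpt.isBounded
  have hdefect_lim : Tendsto (fun m => f (avg m) - avg m) atTop (𝓝 0) := by
    simp only [hdefect]
    refine squeeze_zero_norm (a := fun m : ℕ => ((m : ℝ) + 1)⁻¹ * (R + R)) (fun m => ?_) ?_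
    · rw [norm_smul, Real.norm_of_nonneg (by positivity)]
      gcongr
      exact (norm_sub_le _ _).trans (add_le_add (hR _ (hf.iterate _ hx₀)) (hR _ hx₀))
    · simpa using (tendsto_one_div_add_atTop_nhds_zero_nat (𝕜 := ℝ)).mul_const (R + R)
  obtain ⟨x, hx, φ, hφ, hlim⟩ := hcpt.tendsto_subseq havg_mem
  refine ⟨x, hx, tendsto_nhds_unique ((f.continuous.tendsto x).comp hlim) ?_⟩
  simpa [Function.comp_def] using (hdefect_lim.comp hφ.tendsto_atTop).add hlim

section SupportedSimplex

variable {n : Type*} [Fintype n]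

def supportedSimplex (p : n → Prop) : Set (n → ℝ) :=
  stdSimplex ℝ n ∩ {κ | ∀ z, ¬p z → κ z = 0}

variable {p : n → Prop}

theorem convex_supportedSimplex : Convex ℝ (supportedSimplex p) :=
  (convex_stdSimplex ℝ n).inter fun κ hκ ν hν a b _ _ _ z hz => by
    simp [hκ z hz, hν z hz]

theorem isCompact_supportedSimplex : IsCompact (supportedSimplex p) := by
  refine (isCompact_stdSimplex ℝ n).inter_right ?_
  rw [show {κ : n → ℝ | ∀ z, ¬p z → κ z = 0} = ⋂ z, ⋂ _ : ¬p z, {κ | κ z = 0} by ext; simp]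
  exact isClosed_iInter fun z => isClosed_iInter fun _ =>
    isClosed_eq (continuous_apply z) continuous_const

theorem single_mem_supportedSimplex [DecidableEq n] {z : n} (hz : p z) :
    Pi.single z 1 ∈ supportedSimplex p :=
  ⟨single_mem_stdSimplex ℝ z, fun _ hz' =>
    Pi.single_eq_of_ne (ne_of_apply_ne p (by simp_all)) _⟩

theorem mapsTo_vecMul_supportedSimplex [DecidableEq n] {K : Matrix n n ℝ}
    (hK : K ∈ rowStochastic ℝ n) (hKp : ∀ z z', p z → K z z' ≠ 0 → p z') :
    MapsTo (· ᵥ* K) (supportedSimplex p) (supportedSimplex p) := by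
  rintro κ ⟨hκ, hκp⟩
  refine ⟨⟨nonneg_vecMul_of_mem_rowStochastic hK hκ.1, ?_⟩, fun z' hz' => ?_⟩
  · simpa [dotProduct_one] using vecMul_dotProduct_one_eq_one_rowStochastic hK
      (by simpa [dotProduct_one] using hκ.2)
  · refine Finset.sum_eq_zero fun z _ => ?_
    show κ z * K z z' = 0
    by_cases hz : p z
    · rw [not_imp_comm.1 (hKp z z' hz) hz', mul_zero]
    · rw [hκp z hz, zero_mul]

end SupportedSimplex

section Marginal

variable {α β : Type*} [Fintype α] [Fintype β]

def fstMarginal (κ : α × β → ℝ) (x : α) : ℝ := ∑ y, κ (x, y)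

def sndMarginal (κ : α × β → ℝ) (y : β) : ℝ := ∑ x, κ (x, y)

theorem sum_fstMarginal (κ : α × β → ℝ) : ∑ x, fstMarginal κ x = ∑ z, κ z :=
  (Fintype.sum_prod_type κ).symm

theorem sum_sndMarginal (κ : α × β → ℝ) : ∑ y, sndMarginal κ y = ∑ z, κ z :=
  (Fintype.sum_prod_type_right κ).symm

end Marginal

namespace Matrix

section Harmonic

variable {n : Type*} [Fintype n] [DecidableEq n] {P : Matrix n n ℝ}

theorem apply_eq_of_mulVec_eq_self (hP : P ∈ rowStochastic ℝ n)
    (hconn : ∀ x y, Relation.ReflTransGen (fun a b => 0 < P a b) x y)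
    {h : n → ℝ} (hh : P *ᵥ h = h) (x y : n) : h x = h y := by
  have : Nonempty n := ⟨x⟩
  obtain ⟨x₀, hx₀⟩ := Finite.exists_max h
  -- maximum principle: the maximum of `h` propagates along every positive transition
  have hmax (b : n) (hb : Relation.ReflTransGen (fun a b => 0 < P a b) x₀ b) : h b = h x₀ := by
    induction hb with
    | refl => rfl
    | @tail b c _ hbc ih =>
      have hsum : ∑ c, P b c * (h x₀ - h c) = 0 := by
        simp only [mul_sub, Finset.sum_sub_distrib, ← Finset.sum_mul,
          sum_row_of_mem_rowStochastic hP, one_mul]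
        rw [show ∑ c, P b c * h c = h b from congrFun hh b, ih, sub_self]
      have hterm := (Finset.sum_eq_zero_iff_of_nonneg fun c _ =>
        mul_nonneg (nonneg_of_mem_rowStochastic hP) (sub_nonneg.2 (hx₀ c))).1 hsum c (mem_univ c)
      linarith [(mul_eq_zero.1 hterm).resolve_left hbc.ne']
  rw [hmax x (hconn x₀ x), hmax y (hconn x₀ y)]

theorem eq_of_vecMul_eq_self_of_reversible (hP : P ∈ rowStochastic ℝ n)
    (hconn : ∀ x y, Relation.ReflTransGen (fun a b => 0 < P a b) x y)
    {μ π : n → ℝ} (hμ : ∀ x, 0 < μ x) (hrev : ∀ x y, μ x * P x y = μ y * P y x)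
    (hπ : π ᵥ* P = π) (hsum : ∑ x, π x = ∑ x, μ x) : π = μ := by
  -- by reversibility, `π / μ` is `P`-harmonic, hence constant
  have hharm : P *ᵥ (fun x => π x / μ x) = fun x => π x / μ x := by
    funext y
    have hterm (x : n) : P y x * (π x / μ x) = π x * P x y / μ y := by
      field_simp [(hμ x).ne', (hμ y).ne']
      linear_combination π x * hrev y x
    simp only [mulVec, dotProduct, hterm, ← Finset.sum_div]
    rw [show ∑ x, π x * P x y = π y from congrFun hπ y]
  funext x
  have hπ_eq (y : n) : π y = π x / μ x * μ y := by
    rw [apply_eq_of_mulVec_eq_self hP hconn hharm x y, div_mul_cancel₀ _ (hμ y).ne']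
  have hμsum : 0 < ∑ y, μ y := Finset.sum_pos (fun y _ => hμ y) ⟨x, mem_univ x⟩
  have hratio : π x / μ x = 1 := by
    rw [Finset.sum_congr rfl fun y _ => hπ_eq y, ← Finset.mul_sum] at hsum
    exact (mul_eq_right₀ hμsum.ne').1 hsum
  rw [hπ_eq x, hratio, one_mul]

end Harmonic

section LazyAverage

variable {n ι : Type*} [DecidableEq n] [Fintype ι]

/-- The identity summand keeps this average row-stochastic even when `ι` is empty. -/
noncomputable def lazyAverage (T : ι → Matrix n n ℝ) : Matrix n n ℝ :=
  ((Fintype.card ι : ℝ) + 1)⁻¹ • (1 + ∑ i, T i)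

variable {T : ι → Matrix n n ℝ}

theorem lazyAverage_apply (x y : n) : lazyAverage T x y =
    ((Fintype.card ι : ℝ) + 1)⁻¹ * ((1 : Matrix n n ℝ) x y + ∑ i, T i x y) := by
  simp [lazyAverage, Matrix.sum_apply]

theorem lazyAverage_nonneg (hT : ∀ i x y, 0 ≤ T i x y) {x y : n} :
    0 ≤ lazyAverage T x y := by
  rw [lazyAverage_apply]
  exact mul_nonneg (by positivity) (add_nonneg (by rw [one_apply]; positivity)
    (Finset.sum_nonneg fun i _ => hT i x y))

theorem lazyAverage_pos (hT : ∀ i x y, 0 ≤ T i x y) {i : ι} {x y : n} (h : 0 < T i x y) :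
    0 < lazyAverage T x y := by
  rw [lazyAverage_apply]
  have : (0 : ℝ) ≤ (1 : Matrix n n ℝ) x y := by rw [one_apply]; positivity
  have : 0 < ∑ i, T i x y := Finset.sum_pos' (fun i _ => hT i x y) ⟨i, mem_univ i, h⟩
  positivity

theorem lazyAverage_mem_rowStochastic [Fintype n] (hT : ∀ i, T i ∈ rowStochastic ℝ n) :
    lazyAverage T ∈ rowStochastic ℝ n := by
  refine mem_rowStochastic_iff_sum.2
    ⟨fun x y => lazyAverage_nonneg fun i _ _ => nonneg_of_mem_rowStochastic (hT i), fun x => ?_⟩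
  simp only [lazyAverage_apply, ← Finset.mul_sum, Finset.sum_add_distrib]
  rw [Finset.sum_comm]
  simp [sum_row_of_mem_rowStochastic (hT _), one_apply, add_comm (1 : ℝ), field]

theorem lazyAverage_reversible {μ : n → ℝ} (hT : ∀ i x y, μ x * T i x y = μ y * T i y x)
    (x y : n) : μ x * lazyAverage T x y = μ y * lazyAverage T y x := by
  have hone : μ x * (1 : Matrix n n ℝ) x y = μ y * (1 : Matrix n n ℝ) y x := by
    rcases eq_or_ne x y with rfl | hxy
    · rfl
    · simp [one_apply_ne hxy, one_apply_ne hxy.symm]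
  simp only [lazyAverage_apply, mul_left_comm (μ _), mul_add, Finset.mul_sum, hone, hT _ x y]

theorem of_lazyAverage_ne_zero {p : n → Prop} (hT : ∀ i x y, p x → T i x y ≠ 0 → p y)
    {x y : n} (hx : p x) (h : lazyAverage T x y ≠ 0) : p y := by
  rcases eq_or_ne x y with rfl | hxy
  · exact hx
  rw [lazyAverage_apply, one_apply_ne hxy, zero_add] at h
  obtain ⟨i, -, hi⟩ := Finset.exists_ne_zero_of_sum_ne_zero (right_ne_zero_of_mul h)
  exact hT i x y hx hi

end LazyAverage

section Coupling

variable {α β : Type*} [Fintype α] [Fintype β]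

structure IsMarkovCoupling (K : Matrix (α × β) (α × β) ℝ) (A : Matrix α α ℝ)
    (B : Matrix β β ℝ) : Prop where
  sum_snd : ∀ z x', ∑ y', K z (x', y') = A z.1 x'
  sum_fst : ∀ z y', ∑ x', K z (x', y') = B z.2 y'

namespace IsMarkovCoupling

variable {K : Matrix (α × β) (α × β) ℝ} {A : Matrix α α ℝ} {B : Matrix β β ℝ}

theorem fstMarginal_vecMul (h : IsMarkovCoupling K A B) (κ : α × β → ℝ) :
    fstMarginal (κ ᵥ* K) = fstMarginal κ ᵥ* A := by
  funext x'
  calc ∑ y', (κ ᵥ* K) (x', y') = ∑ z, κ z * ∑ y', K z (x', y') := by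
        simp only [vecMul, dotProduct, Finset.mul_sum]; exact Finset.sum_comm
    _ = ∑ z, κ z * A z.1 x' := by simp only [h.sum_snd]
    _ = ∑ x, (∑ y, κ (x, y)) * A x x' := by
        simp only [Finset.sum_mul]; exact Fintype.sum_prod_type _

theorem sndMarginal_vecMul (h : IsMarkovCoupling K A B) (κ : α × β → ℝ) :
    sndMarginal (κ ᵥ* K) = sndMarginal κ ᵥ* B := by
  funext y'
  calc ∑ x', (κ ᵥ* K) (x', y') = ∑ z, κ z * ∑ x', K z (x', y') := by
        simp only [vecMul, dotProduct, Finset.mul_sum]; exact Finset.sum_comm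
    _ = ∑ z, κ z * B z.2 y' := by simp only [h.sum_fst]
    _ = ∑ y, (∑ x, κ (x, y)) * B y y' := by
        simp only [Finset.sum_mul]; exact Fintype.sum_prod_type_right _

theorem mem_rowStochastic [DecidableEq α] [DecidableEq β] (h : IsMarkovCoupling K A B)
    (hA : A ∈ rowStochastic ℝ α) (hK : ∀ z z', 0 ≤ K z z') : K ∈ rowStochastic ℝ (α × β) :=
  mem_rowStochastic_iff_sum.2 ⟨hK, fun z => by
    rw [Fintype.sum_prod_type]
    simp only [h.sum_snd, sum_row_of_mem_rowStochastic hA]⟩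

theorem one [DecidableEq α] [DecidableEq β] :
    IsMarkovCoupling (1 : Matrix (α × β) (α × β) ℝ) 1 1 where
  sum_snd z x' := by simp [one_apply, Prod.ext_iff, ite_and]
  sum_fst z y' := by simp [one_apply, Prod.ext_iff, ite_and]

theorem lazyAverage [DecidableEq α] [DecidableEq β] {ι : Type*} [Fintype ι]
    {K : ι → Matrix (α × β) (α × β) ℝ} {A : ι → Matrix α α ℝ} {B : ι → Matrix β β ℝ}
    (h : ∀ i, IsMarkovCoupling (K i) (A i) (B i)) :
    IsMarkovCoupling (Matrix.lazyAverage K) (Matrix.lazyAverage A) (Matrix.lazyAverage B) where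
  sum_snd z x' := by
    simp only [lazyAverage_apply, ← Finset.mul_sum, Finset.sum_add_distrib, one.sum_snd]
    rw [Finset.sum_comm]
    simp only [(h _).sum_snd]
  sum_fst z y' := by
    simp only [lazyAverage_apply, ← Finset.mul_sum, Finset.sum_add_distrib, one.sum_fst]
    rw [Finset.sum_comm]
    simp only [(h _).sum_fst]

end IsMarkovCoupling

end Coupling

end Matrix

/-- The coupling of two laws on `Bool` with maximal mass on the diagonal. -/
def boolCoupling (P Q : Bool → ℝ) : Bool → Bool → ℝ
  | true, true => min (P true) (Q true)
  | false, false => min (P false) (Q false)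
  | true, false => P true - min (P true) (Q true)
  | false, true => Q true - min (P true) (Q true)

section BoolCoupling

variable {P Q : Bool → ℝ}

theorem boolCoupling_nonneg (hP : ∀ b, 0 ≤ P b) (hQ : ∀ b, 0 ≤ Q b) (a b : Bool) :
    0 ≤ boolCoupling P Q a b := by
  cases a <;> cases b <;> simp [boolCoupling, hP, hQ]

theorem sum_boolCoupling_right (hP : ∑ b, P b = 1) (hQ : ∑ b, Q b = 1) (a : Bool) :
    ∑ b, boolCoupling P Q a b = P a := by
  simp only [Fintype.sum_bool] at hP hQ
  cases a <;> simp only [Fintype.sum_bool, boolCoupling, min_def] <;> split_ifs <;> linarith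

theorem sum_boolCoupling_left (hP : ∑ b, P b = 1) (hQ : ∑ b, Q b = 1) (b : Bool) :
    ∑ a, boolCoupling P Q a b = Q b := by
  simp only [Fintype.sum_bool] at hP hQ
  cases b <;> simp only [Fintype.sum_bool, boolCoupling, min_def] <;> split_ifs <;> linarith

theorem le_of_boolCoupling_ne_zero (hPQ : P true ≤ Q true) {a b : Bool}
    (h : boolCoupling P Q a b ≠ 0) : a ≤ b := by
  cases a <;> cases b <;> simp_all [boolCoupling]

end BoolCoupling

section Update

variable {I β : Type*} [DecidableEq I]

theorem update_eq_iff_update_eq {x y : I → β} {j : I} :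
    update x j (y j) = y ↔ update y j (x j) = x := by
  constructor <;> intro h <;> rw [← h, update_idem, update_eq_self]

theorem Relation.reflTransGen_of_forall_update [Fintype I] {R : (I → β) → (I → β) → Prop}
    (hR : ∀ x j b, R x (update x j b)) (x y : I → β) : Relation.ReflTransGen R x y := by
  suffices ∀ s : Finset I, Relation.ReflTransGen R x (s.piecewise y x) by
    simpa using this univ
  intro s
  induction s using Finset.induction_on with
  | empty => simp [Relation.ReflTransGen.refl]
  | insert j s _ ih => rw [Finset.piecewise_insert]; exact ih.tail (hR _ j (y j))

end Update

section HeatBath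

variable {I : Type*} [DecidableEq I] {μ μ₁ μ₂ : (I → Bool) → ℝ}

/-- The `μ`-probability that site `j` equals `b`, given that the other sites agree with `x`. -/
noncomputable def condProb (μ : (I → Bool) → ℝ) (j : I) (x : I → Bool) (b : Bool) : ℝ :=
  μ (update x j b) / ∑ c, μ (update x j c)

theorem condProb_pos (hμ : ∀ x, 0 < μ x) (j : I) (x : I → Bool) (b : Bool) :
    0 < condProb μ j x b :=
  div_pos (hμ _) (Finset.sum_pos (fun _ _ => hμ _) univ_nonempty)

theorem sum_condProb (hμ : ∀ x, 0 < μ x) (j : I) (x : I → Bool) :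
    ∑ b, condProb μ j x b = 1 := by
  simp only [condProb]
  rw [← Finset.sum_div, div_self (Finset.sum_pos (fun _ _ => hμ _) univ_nonempty).ne']

theorem condProb_true_le_condProb_true (hμ₁ : ∀ x, 0 < μ₁ x) (hμ₂ : ∀ x, 0 < μ₂ x)
    (hcond : ∀ (j : I) (W Z : I → Bool), W ≤ Z →
      μ₁ (update W j true) * μ₂ (update Z j false) ≤
      μ₂ (update Z j true) * μ₁ (update W j false))
    (j : I) {x y : I → Bool} (hxy : x ≤ y) : condProb μ₁ j x true ≤ condProb μ₂ j y true := by
  simp only [condProb, Fintype.sum_bool]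
  rw [div_le_div_iff₀ (add_pos (hμ₁ _) (hμ₁ _)) (add_pos (hμ₂ _) (hμ₂ _))]
  linarith [hcond j x y hxy]

variable [Fintype I]

noncomputable def siteKernel (μ : (I → Bool) → ℝ) (j : I) : Matrix (I → Bool) (I → Bool) ℝ :=
  fun x y => ∑ b, if update x j b = y then condProb μ j x b else 0

noncomputable def heatBath (μ : (I → Bool) → ℝ) : Matrix (I → Bool) (I → Bool) ℝ :=
  lazyAverage (siteKernel μ)

theorem siteKernel_apply (j : I) (x y : I → Bool) :
    siteKernel μ j x y = if update x j (y j) = y then condProb μ j x (y j) else 0 :=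
  Fintype.sum_eq_single (y j) fun b hb => if_neg fun h => hb (by simp [← h])

theorem siteKernel_mem_rowStochastic (hμ : ∀ x, 0 < μ x) (j : I) :
    siteKernel μ j ∈ rowStochastic ℝ (I → Bool) := by
  refine mem_rowStochastic_iff_sum.2 ⟨fun x y => ?_, fun x => ?_⟩
  · exact Finset.sum_nonneg fun b _ => by split_ifs <;> simp [(condProb_pos hμ j x b).le]
  · simp only [siteKernel]
    rw [Finset.sum_comm]
    simp only [Fintype.sum_ite_eq, sum_condProb hμ]

theorem siteKernel_update_pos (hμ : ∀ x, 0 < μ x) (j : I) (x : I → Bool) (b : Bool) :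
    0 < siteKernel μ j x (update x j b) := by
  rw [siteKernel_apply, if_pos (by simp)]
  exact condProb_pos hμ _ _ _

theorem siteKernel_reversible (j : I) (x y : I → Bool) :
    μ x * siteKernel μ j x y = μ y * siteKernel μ j y x := by
  rw [siteKernel_apply, siteKernel_apply]
  by_cases h : update x j (y j) = y
  · have h' := update_eq_iff_update_eq.1 h
    have hS : ∑ c, μ (update y j c) = ∑ c, μ (update x j c) := by
      rw [← h]; simp only [update_idem]
    rw [if_pos h, if_pos h', condProb, condProb, h, h', hS]
    ring
  · rw [if_neg h, if_neg (mt update_eq_iff_update_eq.2 h)]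
    ring

theorem heatBath_mem_rowStochastic (hμ : ∀ x, 0 < μ x) :
    heatBath μ ∈ rowStochastic ℝ (I → Bool) :=
  lazyAverage_mem_rowStochastic (siteKernel_mem_rowStochastic hμ)

theorem eq_of_vecMul_heatBath_eq_self (hμ : ∀ x, 0 < μ x) {π : (I → Bool) → ℝ}
    (hπ : π ᵥ* heatBath μ = π) (hsum : ∑ x, π x = ∑ x, μ x) : π = μ := by
  refine eq_of_vecMul_eq_self_of_reversible (heatBath_mem_rowStochastic hμ) ?_ hμ
    (lazyAverage_reversible fun j => siteKernel_reversible j) hπ hsum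
  exact Relation.reflTransGen_of_forall_update fun x j b => lazyAverage_pos
    (fun j _ _ => nonneg_of_mem_rowStochastic (siteKernel_mem_rowStochastic hμ j))
    (siteKernel_update_pos hμ j x b)

noncomputable def siteCoupling (μ₁ μ₂ : (I → Bool) → ℝ) (j : I) :
    Matrix ((I → Bool) × (I → Bool)) ((I → Bool) × (I → Bool)) ℝ :=
  fun z z' => ∑ a, ∑ b, if (update z.1 j a, update z.2 j b) = z' then
    boolCoupling (condProb μ₁ j z.1) (condProb μ₂ j z.2) a b else 0

noncomputable def coupledHeatBath (μ₁ μ₂ : (I → Bool) → ℝ) :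
    Matrix ((I → Bool) × (I → Bool)) ((I → Bool) × (I → Bool)) ℝ :=
  lazyAverage (siteCoupling μ₁ μ₂)

theorem siteCoupling_nonneg (hμ₁ : ∀ x, 0 < μ₁ x) (hμ₂ : ∀ x, 0 < μ₂ x) (j : I)
    (z z' : (I → Bool) × (I → Bool)) : 0 ≤ siteCoupling μ₁ μ₂ j z z' :=
  Finset.sum_nonneg fun a _ => Finset.sum_nonneg fun b _ => by
    split_ifs
    · exact boolCoupling_nonneg (fun _ => (condProb_pos hμ₁ _ _ _).le)
        (fun _ => (condProb_pos hμ₂ _ _ _).le) a b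
    · exact le_rfl

theorem isMarkovCoupling_siteCoupling (hμ₁ : ∀ x, 0 < μ₁ x) (hμ₂ : ∀ x, 0 < μ₂ x) (j : I) :
    IsMarkovCoupling (siteCoupling μ₁ μ₂ j) (siteKernel μ₁ j) (siteKernel μ₂ j) where
  sum_snd z x' := by
    simp only [siteCoupling, siteKernel, Prod.mk.injEq, ite_and]
    rw [Finset.sum_comm_cycle, Finset.sum_comm_cycle]
    simp only [Fintype.sum_ite_eq, Finset.sum_ite_irrel, Finset.sum_const_zero,
      sum_boolCoupling_right (sum_condProb hμ₁ j z.1) (sum_condProb hμ₂ j z.2)]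
  sum_fst z y' := by
    simp only [siteCoupling, siteKernel, Prod.mk.injEq, ite_and]
    rw [Finset.sum_comm_cycle]
    refine Finset.sum_congr rfl fun b _ => ?_
    rw [Finset.sum_comm]
    simp only [Fintype.sum_ite_eq, Finset.sum_ite_irrel, Finset.sum_const_zero,
      sum_boolCoupling_left (sum_condProb hμ₁ j z.1) (sum_condProb hμ₂ j z.2)]

theorem le_of_siteCoupling_ne_zero
    (hle : ∀ j x y, x ≤ y → condProb μ₁ j x true ≤ condProb μ₂ j y true) (j : I)
    {z z' : (I → Bool) × (I → Bool)} (hz : z.1 ≤ z.2) (h : siteCoupling μ₁ μ₂ j z z' ≠ 0) :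
    z'.1 ≤ z'.2 := by
  obtain ⟨a, -, ha⟩ := Finset.exists_ne_zero_of_sum_ne_zero h
  obtain ⟨b, -, hb⟩ := Finset.exists_ne_zero_of_sum_ne_zero ha
  obtain ⟨rfl, hab⟩ := ite_ne_right_iff.1 hb
  exact update_le_update_iff.2
    ⟨le_of_boolCoupling_ne_zero (hle j z.1 z.2 hz) hab, fun i _ => hz i⟩

theorem isMarkovCoupling_coupledHeatBath (hμ₁ : ∀ x, 0 < μ₁ x) (hμ₂ : ∀ x, 0 < μ₂ x) :
    IsMarkovCoupling (coupledHeatBath μ₁ μ₂) (heatBath μ₁) (heatBath μ₂) :=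
  IsMarkovCoupling.lazyAverage (isMarkovCoupling_siteCoupling hμ₁ hμ₂)

theorem coupledHeatBath_mem_rowStochastic (hμ₁ : ∀ x, 0 < μ₁ x) (hμ₂ : ∀ x, 0 < μ₂ x) :
    coupledHeatBath μ₁ μ₂ ∈ rowStochastic ℝ ((I → Bool) × (I → Bool)) :=
  (isMarkovCoupling_coupledHeatBath hμ₁ hμ₂).mem_rowStochastic (heatBath_mem_rowStochastic hμ₁)
    fun _ _ => lazyAverage_nonneg (siteCoupling_nonneg hμ₁ hμ₂)

theorem le_of_coupledHeatBath_ne_zero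
    (hle : ∀ j x y, x ≤ y → condProb μ₁ j x true ≤ condProb μ₂ j y true)
    {z z' : (I → Bool) × (I → Bool)} (hz : z.1 ≤ z.2) (h : coupledHeatBath μ₁ μ₂ z z' ≠ 0) :
    z'.1 ≤ z'.2 :=
  of_lazyAverage_ne_zero (p := fun z => z.1 ≤ z.2) (fun j _ _ => le_of_siteCoupling_ne_zero hle j)
    hz h

end HeatBath

/-- Holley's inequality: if two strictly positive probability measures on `{0,1}^I`
satisfy the conditional single-coordinate comparison, then `μ₁` is stochastically
dominated by `μ₂`, witnessed by a monotone coupling. -/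
theorem holley_inequality {I : Type*} [Fintype I] [DecidableEq I]
    (μ₁ μ₂ : (I → Bool) → ℝ)
    (hμ₁pos : ∀ x, 0 < μ₁ x) (hμ₂pos : ∀ x, 0 < μ₂ x)
    (hμ₁sum : ∑ x : I → Bool, μ₁ x = 1) (hμ₂sum : ∑ x : I → Bool, μ₂ x = 1)
    (hcond : ∀ (j : I) (W Z : I → Bool), (∀ i, W i ≤ Z i) →
      μ₁ (Function.update W j true) * μ₂ (Function.update Z j false) ≤
      μ₂ (Function.update Z j true) * μ₁ (Function.update W j false)) :
    ∃ κ : (I → Bool) × (I → Bool) → ℝ,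
      (∀ p, 0 ≤ κ p) ∧ (∑ p : (I → Bool) × (I → Bool), κ p = 1) ∧
      (∀ x, ∑ y : I → Bool, κ (x, y) = μ₁ x) ∧
      (∀ y, ∑ x : I → Bool, κ (x, y) = μ₂ y) ∧
      (∀ x y, κ (x, y) ≠ 0 → ∀ i, x i ≤ y i) := by
  have hK := isMarkovCoupling_coupledHeatBath hμ₁pos hμ₂pos
  -- a stationary law of the coupled chain that charges only ordered pairs
  obtain ⟨κ, ⟨hκ, hκ_le⟩, hfix⟩ := Convex.exists_fixedPoint_of_mapsTo
      (C := supportedSimplex fun z : (I → Bool) × (I → Bool) => z.1 ≤ z.2)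
      convex_supportedSimplex isCompact_supportedSimplex
      ⟨_, single_mem_supportedSimplex (z := (⊥, ⊥)) le_rfl⟩
      (LinearMap.toContinuousLinearMap (vecMulLinear (coupledHeatBath μ₁ μ₂)))
      (mapsTo_vecMul_supportedSimplex (coupledHeatBath_mem_rowStochastic hμ₁pos hμ₂pos)
        fun _ _ => le_of_coupledHeatBath_ne_zero
          fun j _ _ => condProb_true_le_condProb_true hμ₁pos hμ₂pos hcond j)
  have hfix : κ ᵥ* coupledHeatBath μ₁ μ₂ = κ := hfix
  have h₁ : fstMarginal κ = μ₁ := eq_of_vecMul_heatBath_eq_self hμ₁pos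
    (by rw [← hK.fstMarginal_vecMul, hfix]) (by rw [sum_fstMarginal, hκ.2, hμ₁sum])
  have h₂ : sndMarginal κ = μ₂ := eq_of_vecMul_heatBath_eq_self hμ₂pos
    (by rw [← hK.sndMarginal_vecMul, hfix]) (by rw [sum_sndMarginal, hκ.2, hμ₂sum])
  exact ⟨κ, hκ.1, hκ.2, congrFun h₁, congrFun h₂,
    fun x y hxy => not_not.1 (mt (hκ_le (x, y)) hxy)⟩
end

section
/- Let E and F be finite sets, q ≥ 1 a natural number, δ : (F → Z/qZ) → (E → Z/qZ) an additive group homomorphism, and p ∈ (0,1). Define a probability measure μ on subsets of E by μ(P) ∝ p^{|P|}·(1-p)^{|E|-|P|}·N(P), where N(P) = |{f : F → Z/qZ : (δ f)(σ) = 0 for all σ ∈ P}|. Then μ is positively associated: for any two increasing families A, B of subsets of E, μ(A ∩ B) ≥ μ(A)·μ(B). -/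
/-!
`N(P)` is the order of the subgroup `Z(P)` of cochains whose coboundary vanishes on `P`.
Since `Z(P ∪ Q) = Z(P) ⊓ Z(Q)` and `Z(P) ⊔ Z(Q) ≤ Z(P ∩ Q)`, the product formula
`|H| |K| = |H ⊓ K| |H ⊔ K|` makes `N` log-supermodular on the lattice of subsets of `E`.
The Bernoulli factor `p^|P| (1-p)^(|E|-|P|)` is modular, so `μ` satisfies the FKG lattice
condition, and the FKG inequality applied to the indicators of `A` and `B` gives the claim.
-/

open Finset

/-- For infinite subgroups both sides may be the junk value `0` of `Nat.card`. -/
theorem AddSubgroup.card_mul_card_eq_card_inf_mul_card_sup {G : Type*} [AddGroup G]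
    (H K : AddSubgroup G) [K.Normal] :
    Nat.card H * Nat.card K =
      Nat.card (H ⊓ K : AddSubgroup G) * Nat.card (H ⊔ K : AddSubgroup G) := by
  have hH : Nat.card (H ⊓ K : AddSubgroup G) * K.relIndex H = Nat.card H :=
    calc Nat.card (H ⊓ K : AddSubgroup G) * K.relIndex H
        = (⊥ : AddSubgroup G).relIndex (H ⊓ K) * (H ⊓ K).relIndex H := by
          rw [relIndex_bot_left, inf_relIndex_left]
      _ = Nat.card H := by
          rw [relIndex_mul_relIndex _ _ _ bot_le inf_le_left, relIndex_bot_left]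
  have hHK : Nat.card K * K.relIndex H = Nat.card (H ⊔ K : AddSubgroup G) :=
    calc Nat.card K * K.relIndex H
        = (⊥ : AddSubgroup G).relIndex K * K.relIndex (H ⊔ K) := by
          rw [relIndex_bot_left, relIndex_sup_right]
      _ = Nat.card (H ⊔ K : AddSubgroup G) := by
          rw [relIndex_mul_relIndex _ _ _ bot_le le_sup_right, relIndex_bot_left]
  rw [← hH, ← hHK]
  ring

namespace AddMonoidHom

variable {G E M : Type*} [AddCommGroup G] [AddGroup M] (δ : G →+ (E → M))

def vanishingOn (P : Set E) : AddSubgroup G :=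
  (AddSubgroup.pi P fun _ => ⊥).comap δ

theorem mem_vanishingOn {P : Set E} {f : G} :
    f ∈ δ.vanishingOn P ↔ ∀ σ ∈ P, δ f σ = 0 := by
  simp [vanishingOn, AddSubgroup.mem_pi]

theorem vanishingOn_union (P Q : Set E) :
    δ.vanishingOn (P ∪ Q) = δ.vanishingOn P ⊓ δ.vanishingOn Q := by
  ext f
  simp only [AddSubgroup.mem_inf, mem_vanishingOn, Set.mem_union, or_imp, forall_and]

theorem vanishingOn_antitone : Antitone δ.vanishingOn := fun _ _ hPQ _ hf =>
  (δ.mem_vanishingOn).2 fun σ hσ => (δ.mem_vanishingOn).1 hf σ (hPQ hσ)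

theorem card_vanishingOn_mul_le [Finite G] (P Q : Set E) :
    Nat.card (δ.vanishingOn P) * Nat.card (δ.vanishingOn Q) ≤
      Nat.card (δ.vanishingOn (P ∩ Q)) * Nat.card (δ.vanishingOn (P ∪ Q)) := by
  have hsup : δ.vanishingOn P ⊔ δ.vanishingOn Q ≤ δ.vanishingOn (P ∩ Q) :=
    sup_le (δ.vanishingOn_antitone Set.inter_subset_left)
      (δ.vanishingOn_antitone Set.inter_subset_right)
  rw [AddSubgroup.card_mul_card_eq_card_inf_mul_card_sup, ← vanishingOn_union, mul_comm]
  exact Nat.mul_le_mul_right _ (AddSubgroup.card_le_of_le hsup)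

end AddMonoidHom

theorem pow_card_inter_mul_pow_card_union {α M : Type*} [DecidableEq α] [CommMonoid M]
    (x : M) (s t : Finset α) : x ^ #(s ∩ t) * x ^ #(s ∪ t) = x ^ #s * x ^ #t := by
  rw [← pow_add, ← pow_add, add_comm, card_union_add_card_inter]

theorem pow_card_compl_inter_mul_pow_card_compl_union {α M : Type*} [Fintype α] [DecidableEq α]
    [CommMonoid M] (x : M) (s t : Finset α) :
    x ^ (Fintype.card α - #(s ∩ t)) * x ^ (Fintype.card α - #(s ∪ t)) =
      x ^ (Fintype.card α - #s) * x ^ (Fintype.card α - #t) := by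
  simp only [← card_compl, compl_inter, compl_union]
  rw [mul_comm, pow_card_inter_mul_pow_card_union]

section BernoulliWeight

variable {α R : Type*} [Fintype α] [CommRing R]

def bernoulliWeight (p : R) (s : Finset α) : R :=
  p ^ #s * (1 - p) ^ (Fintype.card α - #s)

theorem bernoulliWeight_nonneg [PartialOrder R] [IsOrderedRing R] {p : R} (hp₀ : 0 ≤ p)
    (hp₁ : p ≤ 1) (s : Finset α) : 0 ≤ bernoulliWeight p s :=
  mul_nonneg (pow_nonneg hp₀ _) (pow_nonneg (sub_nonneg.2 hp₁) _)

theorem bernoulliWeight_inter_mul_union [DecidableEq α] (p : R) (s t : Finset α) :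
    bernoulliWeight p (s ∩ t) * bernoulliWeight p (s ∪ t) =
      bernoulliWeight p s * bernoulliWeight p t := by
  simp only [bernoulliWeight]
  rw [mul_mul_mul_comm, pow_card_inter_mul_pow_card_union,
    pow_card_compl_inter_mul_pow_card_compl_union, mul_mul_mul_comm]

end BernoulliWeight

theorem logSupermodular_mul {α β : Type*} [Lattice α] [CommSemiring β] [PartialOrder β]
    [IsOrderedRing β] {f g : α → β} (hf₀ : 0 ≤ f) (hg₀ : 0 ≤ g)
    (hf : ∀ a b, f a * f b ≤ f (a ⊓ b) * f (a ⊔ b))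
    (hg : ∀ a b, g a * g b ≤ g (a ⊓ b) * g (a ⊔ b)) (a b : α) :
    (f * g) a * (f * g) b ≤ (f * g) (a ⊓ b) * (f * g) (a ⊔ b) := by
  simp only [Pi.mul_apply, mul_mul_mul_comm]
  exact mul_le_mul (hf a b) (hg a b) (mul_nonneg (hg₀ a) (hg₀ b))
    (mul_nonneg (hf₀ _) (hf₀ _))

theorem IsUpperSet.monotone_ite_mem {α β : Type*} [Preorder α] [Semiring β] [PartialOrder β]
    [IsOrderedRing β] {s : Set α} [DecidablePred (· ∈ s)] (hs : IsUpperSet s) :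
    Monotone fun a => if a ∈ s then (1 : β) else 0 := by
  intro a b hab
  by_cases ha : a ∈ s
  · simp [ha, hs hab ha]
  · simp only [ha, if_false]
    split_ifs <;> simp

theorem fkg_isUpperSet {α β : Type*} [DistribLattice α] [Fintype α] [DecidableEq α]
    [CommSemiring β] [LinearOrder β] [IsStrictOrderedRing β] [ExistsAddOfLE β] {μ : α → β}
    (hμ₀ : 0 ≤ μ) (hμ : ∀ a b, μ a * μ b ≤ μ (a ⊓ b) * μ (a ⊔ b)) {A B : Finset α}
    (hA : IsUpperSet (A : Set α)) (hB : IsUpperSet (B : Set α)) :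
    (∑ a ∈ A, μ a) * ∑ a ∈ B, μ a ≤ (∑ a, μ a) * ∑ a ∈ A ∩ B, μ a := by
  have key := fkg (μ := μ) (f := fun a => if a ∈ A then (1 : β) else 0)
    (g := fun a => if a ∈ B then 1 else 0)
    hμ₀ (fun a => by positivity) (fun a => by positivity)
    (by simpa using hA.monotone_ite_mem) (by simpa using hB.monotone_ite_mem) hμ
  simp only [mul_ite, mul_one, mul_zero, sum_ite_mem, univ_inter] at key
  rwa [inter_comm] at key

/-- Positive association of the plaquette random-cluster measure
`μ(P) ∝ p^{|P|}(1-p)^{|E|-|P|}·N(P)` where `N(P)` counts cochains `f` with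
`δf` vanishing on `P`: for increasing families `A`, `B` of subsets of `E`,
`μ(A ∩ B) ≥ μ(A)·μ(B)`. -/
theorem prcm_positive_association {E F : Type*} [Fintype E] [Fintype F] [DecidableEq E]
    (q : ℕ) (hq : 1 ≤ q)
    (δ : (F → ZMod q) →+ (E → ZMod q))
    (p : ℝ) (hp0 : 0 < p) (hp1 : p < 1)
    (μ : Finset E → ℝ)
    (hsum : ∑ P : Finset E, μ P = 1)
    (hprop : ∃ c : ℝ, 0 < c ∧ ∀ P : Finset E,
      μ P = c * p ^ P.card * (1 - p) ^ (Fintype.card E - P.card) *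
        (Nat.card {f : F → ZMod q | ∀ σ ∈ P, δ f σ = 0} : ℝ))
    (A B : Finset (Finset E))
    (hA : ∀ P ∈ A, ∀ P' : Finset E, P ⊆ P' → P' ∈ A)
    (hB : ∀ P ∈ B, ∀ P' : Finset E, P ⊆ P' → P' ∈ B) :
    (∑ P ∈ A, μ P) * (∑ P ∈ B, μ P) ≤ ∑ P ∈ A ∩ B, μ P := by
  -- makes `ZMod q` finite
  have : NeZero q := ⟨by omega⟩
  obtain ⟨c, hc, hμ⟩ := hprop
  set w : Finset E → ℝ := fun P => c * bernoulliWeight p P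
  set N : Finset E → ℝ := fun P => Nat.card (δ.vanishingOn (P : Set E))
  have hμwN : μ = w * N := by
    funext P
    rw [hμ, Pi.mul_apply, mul_assoc c]
    rfl
  have hw₀ : 0 ≤ w := fun P => mul_nonneg hc.le (bernoulliWeight_nonneg hp0.le hp1.le P)
  have hw : ∀ a b, w a * w b ≤ w (a ⊓ b) * w (a ⊔ b) := fun a b => by
    simp only [w, mul_mul_mul_comm c, inf_eq_inter, sup_eq_union, bernoulliWeight_inter_mul_union,
      le_refl]
  have hN : ∀ a b, N a * N b ≤ N (a ⊓ b) * N (a ⊔ b) := fun a b => by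
    simp only [N, inf_eq_inter, sup_eq_union, coe_inter, coe_union]
    exact_mod_cast δ.card_vanishingOn_mul_le a b
  have key := fkg_isUpperSet (hμwN ▸ mul_nonneg hw₀ fun P => Nat.cast_nonneg _)
    (hμwN ▸ logSupermodular_mul hw₀ (fun P => Nat.cast_nonneg _) hw hN)
    (fun P P' h hP => hA P hP P' h) (fun P P' h hP => hB P hP P' h)
  rwa [hsum, one_mul] at key
end

section
/- Let E and F be finite sets, q ≥ 1 a natural number, δ : (F → Z/qZ) → (E → Z/qZ) any function, β ≥ 0, and p = 1 - e^{-β}. For f : F → Z/qZ and P ⊆ E define κ(f,P) = ∏_{σ ∈ E} ((1-p)·1[σ ∉ P] + p·1[σ ∈ P and (δ f)(σ) = 0]). Then: (i) for every f, Σ_{P ⊆ E} κ(f,P) = e^{-β|E|}·e^{-β H(f)}, where H(f) = -|{σ ∈ E : (δ f)(σ) = 0}|; and (ii) for every P ⊆ E, Σ_{f : F → Z/qZ} κ(f,P) = p^{|P|}·(1-p)^{|E|-|P|}·|{f : F → Z/qZ : (δ f)(σ) = 0 for all σ ∈ P}|. -/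
/-!
Each factor of `κ(f, P)` depends only on whether `σ ∈ P`, so summing over `P` expands a product
of binomials, `∏_σ (p·1[δf(σ) = 0] + (1 - p))`, whose factors are `1` or `e^{-β}`. Fixing `P`
instead, the factors off `P` are all `1 - p` and those on `P` are `p` or `0`, so `κ(f, P)` is
`p^{|P|}(1-p)^{|E|-|P|}` times the indicator that `δf` vanishes on `P`.
-/

open Finset

section ProductsOfIte

variable {ι R : Type*} [Fintype ι]

theorem Fintype.prod_ite_mem_eq_prod_mul_prod_compl [DecidableEq ι] [CommMonoid R]
    (s : Finset ι) (f g : ι → R) :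
    ∏ i, (if i ∈ s then f i else g i) = (∏ i ∈ s, f i) * ∏ i ∈ sᶜ, g i := by
  simpa [piecewise, compl_eq_univ_sdiff] using prod_piecewise univ s f g

theorem Fintype.prod_ite_mem_const [DecidableEq ι] [CommMonoid R] (s : Finset ι) (f : ι → R)
    (c : R) : ∏ i, (if i ∈ s then f i else c) = (∏ i ∈ s, f i) * c ^ (Fintype.card ι - #s) := by
  rw [prod_ite_mem_eq_prod_mul_prod_compl, prod_const, card_compl]

theorem Fintype.sum_prod_ite_mem [DecidableEq ι] [CommSemiring R] (f g : ι → R) :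
    ∑ s : Finset ι, ∏ i, (if i ∈ s then f i else g i) = ∏ i, (f i + g i) := by
  simp_rw [prod_add, ← powerset_univ, prod_ite_mem_eq_prod_mul_prod_compl]

theorem Fintype.prod_ite_one_eq_pow [CommMonoid R] (p : ι → Prop) [DecidablePred p] (x : R) :
    ∏ i, (if p i then 1 else x) = x ^ #{i | ¬ p i} := by
  rw [prod_ite, prod_const_one, one_mul, prod_const]

end ProductsOfIte

theorem coupling_factor_eq_ite {R : Type*} [Ring R] (p : R) (A B : Prop) [Decidable A]
    [Decidable B] :
    (1 - p) * (if A then 0 else 1) + p * (if A ∧ B then 1 else 0) =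
      if A then (if B then p else 0) else 1 - p := by
  split_ifs <;> simp_all

theorem edwards_sokal_coupling_marginals_general {E F : Type*} [Fintype E] [Fintype F] [DecidableEq E] [DecidableEq F]
    (q : ℕ) [NeZero q]
    (δ : (F → ZMod q) → (E → ZMod q))
    (β : ℝ) (p : ℝ) (hp : p = 1 - Real.exp (-β))
    (κ : (F → ZMod q) → Finset E → ℝ)
    (hκ : ∀ f P, κ f P = ∏ σ : E,
      ((1 - p) * (if σ ∈ P then 0 else 1) + p * (if σ ∈ P ∧ δ f σ = 0 then 1 else 0))) :
    (∀ f : F → ZMod q,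
      ∑ P : Finset E, κ f P =
        Real.exp (-β * (Fintype.card E : ℝ)) *
          Real.exp (-β * (-(((Finset.univ.filter fun σ : E => δ f σ = 0).card : ℝ))))) ∧
    (∀ P : Finset E,
      ∑ f : F → ZMod q, κ f P =
        p ^ P.card * (1 - p) ^ (Fintype.card E - P.card) *
          (Nat.card {f : F → ZMod q | ∀ σ ∈ P, δ f σ = 0} : ℝ)) := by
  simp only [coupling_factor_eq_ite] at hκ
  constructor
  · intro f
    have factor_eq (σ : E) : (if δ f σ = 0 then p else 0) + (1 - p) =
        if δ f σ = 0 then 1 else Real.exp (-β) := by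
      split_ifs <;> simp [hp]
    have card_split := card_filter_add_card_filter_not (s := univ) (fun σ ↦ δ f σ = 0)
    rw [card_univ] at card_split
    simp_rw [hκ, Fintype.sum_prod_ite_mem, factor_eq, Fintype.prod_ite_one_eq_pow,
      ← Real.exp_nat_mul, ← Real.exp_add, ← card_split]
    push_cast
    ring_nf
  · intro P
    have κ_eq (f : F → ZMod q) : κ f P = p ^ #P * (1 - p) ^ (Fintype.card E - #P) *
        if ∀ σ ∈ P, δ f σ = 0 then 1 else 0 := by
      rw [hκ, Fintype.prod_ite_mem_const, prod_ite_zero, prod_const]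
      split_ifs <;> ring
    simp_rw [κ_eq, ← mul_sum, sum_boole, Nat.card_eq_fintype_card, Set.coe_ofPred,
      Fintype.card_subtype]

/-- The Edwards–Sokal-type coupling of Potts lattice gauge theory and the
plaquette random-cluster model: with `p = 1 - e^{-β}` and
`κ(f,P) = ∏_σ ((1-p)·1[σ∉P] + p·1[σ∈P, δf(σ)=0])`,
(i) the `f`-marginal is `e^{-β|E|}·e^{-βH(f)}` with `H(f) = -|{σ : δf(σ)=0}|`, and
(ii) the `P`-marginal is `p^{|P|}(1-p)^{|E|-|P|}·|{f : δf vanishes on P}|`. -/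
theorem edwards_sokal_coupling_marginals {E F : Type*} [Fintype E] [Fintype F] [DecidableEq E] [DecidableEq F]
    (q : ℕ) [NeZero q]
    (δ : (F → ZMod q) → (E → ZMod q))
    (β : ℝ) (hβ : 0 ≤ β) (p : ℝ) (hp : p = 1 - Real.exp (-β))
    (κ : (F → ZMod q) → Finset E → ℝ)
    (hκ : ∀ f P, κ f P = ∏ σ : E,
      ((1 - p) * (if σ ∈ P then 0 else 1) + p * (if σ ∈ P ∧ δ f σ = 0 then 1 else 0))) :
    (∀ f : F → ZMod q,
      ∑ P : Finset E, κ f P =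
        Real.exp (-β * (Fintype.card E : ℝ)) *
          Real.exp (-β * (-(((Finset.univ.filter fun σ : E => δ f σ = 0).card : ℝ))))) ∧
    (∀ P : Finset E,
      ∑ f : F → ZMod q, κ f P =
        p ^ P.card * (1 - p) ^ (Fintype.card E - P.card) *
          (Nat.card {f : F → ZMod q | ∀ σ ∈ P, δ f σ = 0} : ℝ)) :=
  edwards_sokal_coupling_marginals_general q δ β p hp κ hκ
end
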